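/- Let δ ∈ (0,1) and let a, b, c, s be real numbers such that a ≥ δ, c ≥ δ s², and δ(t² + s²) ≤ a t² + 2 b t + c for all real t. Then a c − b² ≥ δ² s². -/

import Mathlib

/-!
Subtracting `δ (t² + s²)` leaves the quadratic `(a - δ) t² + 2 b t + (c - δ s²)`, which is
nonnegative, so `b² ≤ (a - δ)(c - δ s²)` by the discriminant. Hence
`a c - b² ≥ δ² s² + δ ((a - δ) s² + (c - δ s²))`, and the bracket is half the sum of that
quadratic at `s` and `-s`, so it is nonnegative.
-/

theorem sq_le_mul_of_forall_quadratic_nonneg {K : Type*} [Field K] [LinearOrder K]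
    [IsStrictOrderedRing K] {a b c : K} (h : ∀ t : K, 0 ≤ a * t ^ 2 + 2 * b * t + c) :
    b ^ 2 ≤ a * c := by
  have hdisc : discrim a (2 * b) c ≤ 0 := discrim_le_zero fun t => by simpa [sq] using h t
  rw [discrim] at hdisc
  linarith

theorem symbol_lower_bound_general (δ a b c s : ℝ) (hδ : δ ∈ Set.Ioo (0 : ℝ) 1)
    (h : ∀ t : ℝ, δ * (t ^ 2 + s ^ 2) ≤ a * t ^ 2 + 2 * b * t + c) :
    δ ^ 2 * s ^ 2 ≤ a * c - b ^ 2 := by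
  have hdisc : b ^ 2 ≤ (a - δ) * (c - δ * s ^ 2) :=
    sq_le_mul_of_forall_quadratic_nonneg fun t => by linarith [h t]
  have heven : 2 * δ * s ^ 2 ≤ a * s ^ 2 + c := by linarith [h s, h (-s)]
  calc δ ^ 2 * s ^ 2 ≤ δ ^ 2 * s ^ 2 + δ * (a * s ^ 2 + c - 2 * δ * s ^ 2) :=
        le_add_of_nonneg_right (mul_nonneg hδ.1.le (by linarith))
    _ = a * c - (a - δ) * (c - δ * s ^ 2) := by ring
    _ ≤ a * c - b ^ 2 := by linarith

/-- Key algebraic step in Lemma 3.1: if `a ≥ δ`, `c ≥ δ s²` and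
`δ(t² + s²) ≤ a t² + 2 b t + c` for all `t`, then `a c − b² ≥ δ² s²`. -/
theorem symbol_lower_bound (δ a b c s : ℝ) (hδ : δ ∈ Set.Ioo (0 : ℝ) 1)
    (ha : δ ≤ a) (hc : δ * s ^ 2 ≤ c)
    (h : ∀ t : ℝ, δ * (t ^ 2 + s ^ 2) ≤ a * t ^ 2 + 2 * b * t + c) :
    δ ^ 2 * s ^ 2 ≤ a * c - b ^ 2 :=
  symbol_lower_bound_general δ a b c s hδ h
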